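/- arXiv:2104.02569 — 3 statements merged into one kernel-verified Lean document; each statement's English description precedes it below -/
import Mathlib

section
/- Fix a real s > 0. Then the proportion (1/N)·#{k ∈ ℤ : 1 ≤ k ≤ N − 1 and S_N(k/N, s) ≠ S_{N,ε_N,δ_N}(k/N, s)} tends to 0 as N → ∞. -/
/-!
Write `h = 1/(2N)` and `y = x - m`. Both `S N x s` and `Sed N ε_N δ_N x s` count pairs `(m, n)`
with `n ≥ 1` and `√n ∈ [y - h, y + h)`: the choice of `δ_N` turns the ratio condition of `Sed` into
`(y - h)² ≤ n < (y + h)²`, and for `x = k/N` with `0 < k < N` the cases `y < 0` and `n = 0` cannot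
occur. The two counts differ only in the cut-off, `n ≤ ⌊sN⌋` for `S` and `y ≤ (√s + ε_N)√N` for
`Sed`, and `(√s + ε_N)√N` lies in `[√⌊sN⌋, √⌊sN⌋ + 2/√⌊sN⌋]`. So `S ≠ Sed` forces some `k/N - m`
into a window of length `2/√⌊sN⌋ + 1/N`, which happens for at most `N` times that length plus one
values of `k`.
-/

open scoped Classical

/-- `S N x0 s` counts the integers `1 ≤ n ≤ ⌊s·N⌋` whose fractional part of `√n`
lies in the arc `[x0 − 1/(2N), x0 + 1/(2N)) + ℤ`. -/
noncomputable def S (N : ℕ) (x0 s : ℝ) : ℕ :=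
  ((Finset.Icc 1 ⌊s * (N : ℝ)⌋₊).filter (fun n : ℕ =>
    ∃ m : ℤ, -(1 / (2 * (N : ℝ))) ≤ Real.sqrt n - x0 + m ∧
      Real.sqrt n - x0 + m < 1 / (2 * (N : ℝ)))).card

/-- `Sed N ε δ x0 s` counts the pairs `(m,n) ∈ ℤ²` with
`(x0 − m)/√N ∈ (−ε, √s + ε]` and `(√N·(n − (x0 − m)²) + δ)/((x0 − m)/√N) ∈ [−1, 1)`;
it is set to `0` when `x0 = 0`. -/
noncomputable def Sed (N : ℕ) (ε δ x0 s : ℝ) : ℕ :=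
  if x0 = 0 then 0
  else
    Set.ncard {p : ℤ × ℤ |
      (x0 - (p.1 : ℝ)) / Real.sqrt N ∈ Set.Ioc (-ε) (Real.sqrt s + ε) ∧
      (Real.sqrt N * ((p.2 : ℝ) - (x0 - (p.1 : ℝ)) ^ 2) + δ) /
          ((x0 - (p.1 : ℝ)) / Real.sqrt N) ∈ Set.Ico (-1 : ℝ) 1}

/-- `ε_N = 1/(2N·√⌊sN⌋) + |√⌊sN⌋/√N − √s|`. -/
noncomputable def epsN (N : ℕ) (s : ℝ) : ℝ :=
  1 / (2 * (N : ℝ) * Real.sqrt (⌊s * (N : ℝ)⌋₊ : ℝ)) +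
    |Real.sqrt (⌊s * (N : ℝ)⌋₊ : ℝ) / Real.sqrt N - Real.sqrt s|

/-- `δ_N = −1/(4N·√N)`. -/
noncomputable def deltaN (N : ℕ) : ℝ := -(1 / (4 * (N : ℝ) * Real.sqrt N))

open Real Set Filter Topology

lemma sqrt_add_one_le_add_inv {x : ℝ} (hx : 0 < x) : √(x + 1) ≤ √x + 1 / (2 * √x) := by
  rw [sqrt_le_left (by positivity)]
  have hsq : (√x + 1 / (2 * √x)) ^ 2 = √x ^ 2 + 1 + 1 / (4 * √x ^ 2) := by
    field_simp
    ring
  rw [hsq, sq_sqrt hx.le]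
  linarith [show 0 < 1 / (4 * x) by positivity]

lemma one_div_two_mul_natCast_le_half (N : ℕ) : 1 / (2 * (N : ℝ)) ≤ 1 / 2 := by
  rcases N.eq_zero_or_pos with rfl | hN
  · norm_num
  · gcongr
    norm_cast
    omega

def arcPairs (h x : ℝ) : Set (ℤ × ℤ) :=
  {p | 0 < p.2 ∧ -h ≤ √(p.2 : ℝ) - x + p.1 ∧ √(p.2 : ℝ) - x + p.1 < h}

lemma injOn_snd_arcPairs {h x : ℝ} (hh : h ≤ 1 / 2) : InjOn Prod.snd (arcPairs h x) := by
  rintro ⟨m, n⟩ ⟨-, hm₁, hm₂⟩ ⟨m', n'⟩ ⟨-, hm₁', hm₂'⟩ (rfl : n = n')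
  have h₁ : (m : ℝ) < m' + 1 := by linarith
  have h₂ : (m' : ℝ) < m + 1 := by linarith
  have : m < m' + 1 := by exact_mod_cast h₁
  have : m' < m + 1 := by exact_mod_cast h₂
  ext
  · omega
  · rfl

lemma S_eq_ncard (N : ℕ) (x s : ℝ) :
    S N x s = {p ∈ arcPairs (1 / (2 * N)) x | p.2 ≤ ⌊s * N⌋₊}.ncard := by
  set T := {p ∈ arcPairs (1 / (2 * N)) x | p.2 ≤ ⌊s * N⌋₊}
  have hT : Prod.snd '' T = Nat.cast '' ↑((Finset.Icc 1 ⌊s * (N : ℝ)⌋₊).filter (fun n : ℕ =>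
      ∃ m : ℤ, -(1 / (2 * (N : ℝ))) ≤ √n - x + m ∧ √n - x + m < 1 / (2 * (N : ℝ)))) := by
    ext n
    constructor
    · rintro ⟨⟨m, n⟩, ⟨⟨hn, h₁, h₂⟩, hnM⟩, rfl⟩
      lift n to ℕ using hn.le
      push_cast at h₁ h₂ hnM
      exact ⟨n, Finset.mem_filter.2 ⟨Finset.mem_Icc.2 ⟨by omega, by omega⟩, m, h₁, h₂⟩, rfl⟩
    · rintro ⟨n, hn, rfl⟩
      obtain ⟨hnI, m, h₁, h₂⟩ := Finset.mem_filter.1 hn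
      obtain ⟨hn₁, hnM⟩ := Finset.mem_Icc.1 hnI
      refine ⟨(m, n), ⟨⟨?_, ?_, ?_⟩, ?_⟩, rfl⟩
      · simp only
        omega
      · push_cast
        exact h₁
      · push_cast
        exact h₂
      · simp only
        omega
  have hinj : InjOn Prod.snd T :=
    (injOn_snd_arcPairs (one_div_two_mul_natCast_le_half N)).mono (sep_subset _ _)
  rw [← hinj.ncard_image, hT, ncard_image_of_injective _ Nat.cast_injective, ncard_coe_finset]
  rfl

section Ratio

variable {N : ℕ} {y : ℝ}

lemma deltaN_ratio_mem_Ico_iff (hN : 0 < N) (hy : y ≠ 0) (t : ℝ) :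
    (√N * (t - y ^ 2) + deltaN N) / (y / √N) ∈ Ico (-1 : ℝ) 1 ↔
      0 ≤ N * (t - (y - 1 / (2 * N)) ^ 2) / y ∧ 0 < N * ((y + 1 / (2 * N)) ^ 2 - t) / y := by
  have hN' : (0 : ℝ) < N := by exact_mod_cast hN
  have hsqN : √(N : ℝ) ^ 2 = N := sq_sqrt hN'.le
  set r := (√N * (t - y ^ 2) + deltaN N) / (y / √N)
  have hr₁ : r + 1 = N * (t - (y - 1 / (2 * N)) ^ 2) / y := by
    simp only [r, deltaN]
    field_simp
    linear_combination 16 * N * (t - y ^ 2) * hsqN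
  have hr₂ : 1 - r = N * ((y + 1 / (2 * N)) ^ 2 - t) / y := by
    simp only [r, deltaN]
    field_simp
    linear_combination -16 * N * (t - y ^ 2) * hsqN
  rw [mem_Ico, ← hr₁, ← hr₂]
  constructor <;> rintro ⟨h₁, h₂⟩ <;> constructor <;> linarith

lemma deltaN_ratio_mem_Ico_iff_of_pos (hN : 0 < N) (hy : 0 < y) (t : ℝ) :
    (√N * (t - y ^ 2) + deltaN N) / (y / √N) ∈ Ico (-1 : ℝ) 1 ↔
      (y - 1 / (2 * N)) ^ 2 ≤ t ∧ t < (y + 1 / (2 * N)) ^ 2 := by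
  have hN' : (0 : ℝ) < N := by exact_mod_cast hN
  rw [deltaN_ratio_mem_Ico_iff hN hy.ne', le_div_iff₀ hy, lt_div_iff₀ hy, zero_mul,
    mul_nonneg_iff_of_pos_left hN', mul_pos_iff_of_pos_left hN', sub_nonneg, sub_pos]

lemma deltaN_ratio_mem_Ico_of_neg (hN : 0 < N) (hy : y < 0) {t : ℝ}
    (ht : (√N * (t - y ^ 2) + deltaN N) / (y / √N) ∈ Ico (-1 : ℝ) 1) :
    (y + 1 / (2 * N)) ^ 2 < t ∧ t ≤ (y - 1 / (2 * N)) ^ 2 := by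
  have hN' : (0 : ℝ) < N := by exact_mod_cast hN
  rw [deltaN_ratio_mem_Ico_iff hN hy.ne, le_div_iff_of_neg hy, lt_div_iff_of_neg hy,
    zero_mul] at ht
  constructor <;> nlinarith

end Ratio

lemma Sed_eq_ncard {N : ℕ} {ε x : ℝ} (s : ℝ) (hN : 0 < N) (hε : 0 ≤ ε) (hεN : ε * √N ≤ 1 / 2)
    (hx : ∀ m : ℤ, x - m ≠ 0) (hxh : ∀ m : ℤ, x - m ≠ 1 / (2 * N)) :
    Sed N ε (deltaN N) x s = {p ∈ arcPairs (1 / (2 * N)) x | x - p.1 ≤ (√s + ε) * √N}.ncard := by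
  have hN' : (0 : ℝ) < N := by exact_mod_cast hN
  have hsN : 0 < √(N : ℝ) := sqrt_pos.2 hN'
  have hh₀ : (0 : ℝ) < 1 / (2 * N) := by positivity
  have hh₁ := one_div_two_mul_natCast_le_half N
  rw [Sed, if_neg (by simpa using hx 0)]
  congr 1
  ext ⟨m, n⟩
  simp only [arcPairs, mem_ofPred_eq, mem_Ioc, div_le_iff₀ hsN, lt_div_iff₀ hsN]
  set h := 1 / (2 * (N : ℝ))
  have hy := hx m
  set y := x - m
  have harc : -h ≤ √(n : ℝ) - x + m ∧ √(n : ℝ) - x + m < h ↔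
      y - h ≤ √(n : ℝ) ∧ √(n : ℝ) < y + h := by
    constructor <;> rintro ⟨h₁, h₂⟩ <;> constructor <;> linarith
  rw [harc]
  constructor
  · rintro ⟨⟨hlo, hhi⟩, hr⟩
    rcases hy.lt_or_gt with hneg | hpos
    · -- `-1/2 < y < 0` would force `0 < n < 1`
      obtain ⟨h₁, h₂⟩ := deltaN_ratio_mem_Ico_of_neg hN hneg hr
      have hn₀ : (0 : ℤ) < n := by exact_mod_cast (sq_nonneg _).trans_lt h₁
      have hn₁ : (1 : ℝ) ≤ n := by exact_mod_cast hn₀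
      nlinarith
    · obtain ⟨h₁, h₂⟩ := (deltaN_ratio_mem_Ico_iff_of_pos hN hpos n).1 hr
      have hn : 0 < n := by
        have hn₀ : (0 : ℤ) ≤ n := by exact_mod_cast (sq_nonneg _).trans h₁
        refine hn₀.lt_of_ne fun hn => hxh m ?_
        rw [← hn, Int.cast_zero] at h₁
        linarith [pow_eq_zero_iff (n := 2) two_ne_zero |>.1 (h₁.antisymm (sq_nonneg _))]
      exact ⟨⟨hn, (le_abs_self _).trans (abs_le_sqrt h₁), (sqrt_lt' (by linarith)).2 h₂⟩, hhi⟩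
  · rintro ⟨⟨hn, h₁, h₂⟩, hU⟩
    have hn₁ : (1 : ℝ) ≤ √(n : ℝ) := one_le_sqrt.2 (by exact_mod_cast hn)
    have hpos : 0 < y := by linarith
    refine ⟨⟨by nlinarith, hU⟩, (deltaN_ratio_mem_Ico_iff_of_pos hN hpos n).2 ⟨?_, ?_⟩⟩
    · calc (y - h) ^ 2 ≤ √(n : ℝ) ^ 2 := sq_le_sq' (by linarith) h₁
        _ = n := sq_sqrt (by positivity)
    · exact (sqrt_lt' (by linarith)).1 h₂

lemma arcPairs_sep_le_eq_sep_sub_le (M : ℕ) {h x U b : ℝ} (hU : √M - h ≤ U) (hUb : U ≤ b)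
    (hb : √M + h ≤ b) (hx : ∀ m : ℤ, x - m ∉ Ioc (√M - h) b) :
    {p ∈ arcPairs h x | p.2 ≤ M} = {p ∈ arcPairs h x | x - p.1 ≤ U} := by
  ext ⟨m, n⟩
  refine and_congr_right fun ⟨hn, h₁, h₂⟩ => ?_
  have hnM : n ≤ M ↔ √(n : ℝ) ≤ √M := by
    rw [sqrt_le_sqrt_iff (Nat.cast_nonneg M)]
    exact_mod_cast Iff.rfl
  have hm := hx m
  rw [mem_Ioc, not_and_or, not_lt, not_le] at hm
  rw [hnM]
  rcases hm with hlo | hhi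
  · exact iff_of_true (by linarith) (by linarith)
  · exact iff_of_false (by linarith) (by linarith)

lemma natCast_div_sub_intCast_ne_zero {k N : ℕ} (hk : k ∈ Finset.Ico 1 N) (m : ℤ) :
    (k : ℝ) / N - m ≠ 0 := by
  obtain ⟨hk₁, hkN⟩ := Finset.mem_Ico.1 hk
  have hN : (N : ℝ) ≠ 0 := by norm_cast; omega
  rw [div_sub' hN, div_ne_zero_iff]
  refine ⟨fun h => ?_, hN⟩
  have h : (k : ℤ) = N * m := by exact_mod_cast sub_eq_zero.1 h
  rcases le_or_gt m 0 with hm | hm <;> nlinarith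

lemma natCast_div_sub_intCast_ne_one_div_two_mul (k : ℕ) {N : ℕ} (hN : 0 < N) (m : ℤ) :
    (k : ℝ) / N - m ≠ 1 / (2 * N) := by
  have hN : (N : ℝ) ≠ 0 := by positivity
  intro h
  field_simp at h
  have h : ((k : ℤ) - N * m) * 2 = 1 := by exact_mod_cast h
  omega

lemma card_filter_exists_sub_mem_Ioc_le (N : ℕ) {a b : ℝ} (hab : a ≤ b) :
    (((Finset.range N).filter fun k : ℕ => ∃ m : ℤ, (k : ℝ) / N - m ∈ Ioc a b).card : ℝ) ≤
      N * (b - a) + 1 := by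
  have hsub : (Finset.range N).filter (fun k : ℕ => ∃ m : ℤ, (k : ℝ) / N - m ∈ Ioc a b) ⊆
      (Finset.Ioc ⌊N * a⌋ ⌊N * b⌋).image fun j : ℤ => (j % N).toNat := by
    intro k hk
    obtain ⟨hkN, m, hlo, hhi⟩ := Finset.mem_filter.1 hk
    have hkN : k < N := Finset.mem_range.1 hkN
    have hj : (((k - N * m : ℤ)) : ℝ) = N * ((k : ℝ) / N - m) := by
      have : (N : ℝ) ≠ 0 := by norm_cast; omega
      push_cast
      field_simp
    refine Finset.mem_image.2 ⟨k - N * m, Finset.mem_Ioc.2 ⟨?_, ?_⟩, ?_⟩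
    · rw [Int.floor_lt, hj]
      exact mul_lt_mul_of_pos_left hlo (by norm_cast; omega)
    · rw [Int.le_floor, hj]
      exact mul_le_mul_of_nonneg_left hhi (Nat.cast_nonneg N)
    · rw [Int.sub_mul_emod_self_left, Int.emod_eq_of_lt (by omega) (by omega), Int.toNat_natCast]
  have hfloor : ((⌊N * b⌋ - ⌊N * a⌋ : ℤ) : ℝ) ≤ N * (b - a) + 1 := by
    push_cast
    linarith [Int.floor_le ((N : ℝ) * b), Int.sub_one_lt_floor ((N : ℝ) * a)]
  calc (((Finset.range N).filter _).card : ℝ)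
      ≤ ((Finset.Ioc ⌊N * a⌋ ⌊N * b⌋).card : ℝ) := by
        exact_mod_cast (Finset.card_le_card hsub).trans Finset.card_image_le
    _ = (((⌊N * b⌋ - ⌊N * a⌋).toNat : ℤ) : ℝ) := by rw [Int.card_Ioc]; rfl
    _ ≤ N * (b - a) + 1 := by
        rw [Int.toNat_eq_max, Int.cast_max, Int.cast_zero]
        exact max_le hfloor (by nlinarith [Nat.cast_nonneg (α := ℝ) N])

section EpsN

variable {N : ℕ} {s : ℝ}

lemma sqrt_natFloor_le_sqrt_mul_sqrt (hs : 0 ≤ s) : √(⌊s * N⌋₊ : ℝ) ≤ √s * √N := by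
  rw [← sqrt_mul hs]
  exact sqrt_le_sqrt (Nat.floor_le (by positivity))

lemma sqrt_mul_sqrt_le_sqrt_natFloor_add (hs : 0 ≤ s) (hM : 0 < ⌊s * N⌋₊) :
    √s * √N ≤ √(⌊s * N⌋₊ : ℝ) + 1 / (2 * √(⌊s * N⌋₊ : ℝ)) := by
  rw [← sqrt_mul hs]
  calc √(s * N) ≤ √((⌊s * N⌋₊ : ℝ) + 1) := sqrt_le_sqrt (Nat.lt_floor_add_one _).le
    _ ≤ _ := sqrt_add_one_le_add_inv (by exact_mod_cast hM)

lemma epsN_nonneg : 0 ≤ epsN N s := by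
  unfold epsN
  positivity

lemma epsN_mul_sqrt_le (hs : 0 ≤ s) (hN : 0 < N) (hM : 0 < ⌊s * N⌋₊) :
    epsN N s * √N ≤ 1 / √(⌊s * N⌋₊ : ℝ) := by
  set M : ℝ := (⌊s * N⌋₊ : ℝ) with hMdef
  have hM' : 0 < √M := sqrt_pos.2 (by rw [hMdef]; exact_mod_cast hM)
  have hN' : 1 ≤ √(N : ℝ) := one_le_sqrt.2 (by exact_mod_cast hN)
  have hsqN : √(N : ℝ) ^ 2 = N := sq_sqrt (Nat.cast_nonneg N)
  have hle : √M / √N ≤ √s := by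
    rw [div_le_iff₀ (by positivity)]
    exact sqrt_natFloor_le_sqrt_mul_sqrt hs
  have heq : epsN N s * √N = 1 / (2 * √N * √M) + (√s * √N - √M) := by
    rw [epsN, ← hMdef, abs_of_nonpos (by linarith)]
    field_simp
    linear_combination hsqN
  have h₁ : 1 / (2 * √N * √M) ≤ 1 / (2 * √M) := by
    gcongr
    nlinarith
  have h₂ : 1 / (2 * √M) + 1 / (2 * √M) = 1 / √M := by
    field_simp
    ring
  linarith [sqrt_mul_sqrt_le_sqrt_natFloor_add hs hM]

lemma sqrt_natFloor_le_sqrt_add_epsN_mul (hs : 0 ≤ s) :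
    √(⌊s * N⌋₊ : ℝ) ≤ (√s + epsN N s) * √N := by
  have := mul_nonneg (epsN_nonneg (N := N) (s := s)) (sqrt_nonneg N)
  linarith [sqrt_natFloor_le_sqrt_mul_sqrt (N := N) hs]

lemma sqrt_add_epsN_mul_le (hs : 0 ≤ s) (hN : 0 < N) (hM : 0 < ⌊s * N⌋₊) :
    (√s + epsN N s) * √N ≤ √(⌊s * N⌋₊ : ℝ) + 2 / √(⌊s * N⌋₊ : ℝ) := by
  have h₁ := sqrt_mul_sqrt_le_sqrt_natFloor_add hs hM
  have h₂ := epsN_mul_sqrt_le hs hN hM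
  have h₃ : 0 ≤ 1 / √(⌊s * N⌋₊ : ℝ) := by positivity
  linarith [add_mul √s (epsN N s) √N,
    show 1 / (2 * √(⌊s * N⌋₊ : ℝ)) = 1 / √(⌊s * N⌋₊ : ℝ) / 2 by ring,
    show 2 / √(⌊s * N⌋₊ : ℝ) = 2 * (1 / √(⌊s * N⌋₊ : ℝ)) by ring]

lemma exists_sub_mem_Ioc_of_S_ne_Sed {k : ℕ} (hs : 0 ≤ s) (hM : 4 ≤ ⌊s * N⌋₊)
    (hk : k ∈ Finset.Ico 1 N)
    (hne : S N ((k : ℝ) / N) s ≠ Sed N (epsN N s) (deltaN N) ((k : ℝ) / N) s) :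
    ∃ m : ℤ, (k : ℝ) / N - m ∈ Ioc (√(⌊s * N⌋₊ : ℝ) - 1 / (2 * N))
      (√(⌊s * N⌋₊ : ℝ) + 1 / (2 * N) + 2 / √(⌊s * N⌋₊ : ℝ)) := by
  by_contra! hx
  have hN : 0 < N := by have := Finset.mem_Ico.1 hk; omega
  have hM₀ : 0 < ⌊s * N⌋₊ := by omega
  have hsqrtM : 2 ≤ √(⌊s * N⌋₊ : ℝ) :=
    (le_sqrt zero_le_two (Nat.cast_nonneg _)).2 (by norm_num; exact_mod_cast hM)
  have hεN : epsN N s * √N ≤ 1 / 2 :=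
    (epsN_mul_sqrt_le hs hN hM₀).trans (one_div_le_one_div_of_le two_pos hsqrtM)
  have hh : (0 : ℝ) ≤ 1 / (2 * N) := by positivity
  apply hne
  rw [S_eq_ncard, Sed_eq_ncard s hN epsN_nonneg hεN (natCast_div_sub_intCast_ne_zero hk)
    (natCast_div_sub_intCast_ne_one_div_two_mul k hN),
    arcPairs_sep_le_eq_sep_sub_le _ ?_ ?_ ?_ hx]
  · linarith [sqrt_natFloor_le_sqrt_add_epsN_mul (N := N) hs]
  · linarith [sqrt_add_epsN_mul_le hs hN hM₀]
  · linarith [show 0 ≤ 2 / √(⌊s * N⌋₊ : ℝ) by positivity]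

lemma card_filter_S_ne_Sed_le (hs : 0 ≤ s) (hM : 4 ≤ ⌊s * N⌋₊) :
    (((Finset.Ico 1 N).filter fun k : ℕ =>
      S N ((k : ℝ) / N) s ≠ Sed N (epsN N s) (deltaN N) ((k : ℝ) / N) s).card : ℝ) ≤
      N * (2 / √(⌊s * N⌋₊ : ℝ)) + 2 := by
  have hN : (N : ℝ) ≠ 0 := by
    rintro hN
    simp [hN] at hM
  set r := √(⌊s * N⌋₊ : ℝ)
  set h := 1 / (2 * (N : ℝ))
  have hsub : (Finset.Ico 1 N).filter (fun k : ℕ =>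
      S N ((k : ℝ) / N) s ≠ Sed N (epsN N s) (deltaN N) ((k : ℝ) / N) s) ⊆
      (Finset.range N).filter fun k : ℕ =>
        ∃ m : ℤ, (k : ℝ) / N - m ∈ Ioc (r - h) (r + h + 2 / r) := by
    intro k hk
    obtain ⟨hk, hne⟩ := Finset.mem_filter.1 hk
    exact Finset.mem_filter.2 ⟨Finset.mem_range.2 (Finset.mem_Ico.1 hk).2,
      exists_sub_mem_Ioc_of_S_ne_Sed hs hM hk hne⟩
  calc _ ≤ (((Finset.range N).filter fun k : ℕ =>
          ∃ m : ℤ, (k : ℝ) / N - m ∈ Ioc (r - h) (r + h + 2 / r)).card : ℝ) := by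
        exact_mod_cast Finset.card_le_card hsub
    _ ≤ N * ((r + h + 2 / r) - (r - h)) + 1 :=
        card_filter_exists_sub_mem_Ioc_le N (by
          linarith [show 0 ≤ h by positivity, show 0 ≤ 2 / r by positivity])
    _ = N * (2 / r) + 2 := by
        simp only [h]
        field_simp
        ring

end EpsN

theorem proportion_S_ne_Sed_tendsto_zero (s : ℝ) (hs : 0 < s) :
    Filter.Tendsto
      (fun N : ℕ =>
        (((Finset.Ico 1 N).filter (fun k : ℕ =>
          S N ((k : ℝ) / N) s ≠ Sed N (epsN N s) (deltaN N) ((k : ℝ) / N) s)).card : ℝ) / N)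
      Filter.atTop (nhds 0) := by
  have hM : Tendsto (fun N : ℕ => ⌊s * N⌋₊) atTop atTop :=
    tendsto_nat_floor_atTop.comp (tendsto_natCast_atTop_atTop.const_mul_atTop hs)
  have hbound : Tendsto (fun N : ℕ => 2 / √(⌊s * N⌋₊ : ℝ) + 2 / N) atTop (𝓝 0) := by
    simpa using ((tendsto_sqrt_atTop.comp (tendsto_natCast_atTop_atTop.comp hM)).const_div_atTop
      2).add (tendsto_const_div_atTop_nhds_zero_nat 2)
  refine squeeze_zero' (.of_forall fun N => by positivity) ?_ hbound
  filter_upwards [hM.eventually_ge_atTop 4, eventually_gt_atTop 0] with N hM₄ hN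
  have hN' : (0 : ℝ) < N := by exact_mod_cast hN
  rw [div_le_iff₀ hN', add_mul, div_mul_cancel₀ _ hN'.ne', mul_comm]
  exact card_filter_S_ne_Sed_le hs.le hM₄
end

section
/- Fix a real s > 0. Then the proportion (1/N)·#{k ∈ ℤ : 1 ≤ k ≤ N − 1 and S_{N,−ε_N,δ_N}(k/N, s) < S_{N,ε_N,δ_N}(k/N, s)} tends to 0 as N → ∞. -/
/-!
A pair `(m, n)` counted with `ε` but not with `-ε` has `(x0 - m)/√N` within `ε` of `0` or of `√s`.
For `x0 = k/N` this puts `k - mN`, a representative of `k` modulo `N`, into one of two intervals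
of length `2εN√N`. Distinct `k ∈ [1, N)` have distinct residues, so at most `4εN√N + 2` values of
`k` are counted; since `ε_N = O(1/N)`, this is `O(√N) = o(N)`.
-/

open scoped Classical

lemma abs_sqrt_sub_sqrt_le {a b : ℝ} (ha : 0 ≤ a) (hb : 0 < b) :
    |√a - √b| ≤ |a - b| / √b := by
  have hsb : 0 < √b := Real.sqrt_pos.mpr hb
  have hfactor : |a - b| = |√a - √b| * (√a + √b) := by
    rw [← abs_of_nonneg (by positivity : 0 ≤ √a + √b), ← abs_mul]
    congr 1
    nlinarith [Real.sq_sqrt ha, Real.sq_sqrt hb.le]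
  rw [le_div_iff₀ hsb, hfactor]
  exact mul_le_mul_of_nonneg_left (by linarith [Real.sqrt_nonneg a]) (abs_nonneg _)

lemma epsN_le {N : ℕ} {s : ℝ} (hs : 0 < s) (hsN : 1 ≤ s * N) :
    epsN N s ≤ (1 / 2 + 1 / √s) / N := by
  obtain rfl | hN := Nat.eq_zero_or_pos N
  · norm_num at hsN
  have hN : (0 : ℝ) < N := by exact_mod_cast hN
  set F : ℝ := (⌊s * N⌋₊ : ℝ)
  have hF_le : F ≤ s * N := Nat.floor_le (by positivity)
  have hF_gt : s * N - 1 < F := by linarith [Nat.lt_floor_add_one (s * N)]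
  have hF_one : 1 ≤ F := by
    show (1 : ℝ) ≤ (⌊s * N⌋₊ : ℝ)
    exact_mod_cast Nat.le_floor (by exact_mod_cast hsN)
  have hfirst : 1 / (2 * N * √F) ≤ 1 / (2 * N) :=
    one_div_le_one_div_of_le (by positivity) (by nlinarith [Real.one_le_sqrt.mpr hF_one])
  have hratio : |F / N - s| ≤ 1 / N := by
    rw [show F / N - s = (F - s * N) / N by field_simp, abs_div, abs_of_pos hN,
      div_le_div_iff_of_pos_right hN, abs_le]
    constructor <;> linarith
  have hsecond : |√F / √N - √s| ≤ 1 / (√s * N) := by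
    rw [← Real.sqrt_div' _ hN.le]
    calc |√(F / N) - √s| ≤ |F / N - s| / √s := abs_sqrt_sub_sqrt_le (by positivity) hs
      _ ≤ 1 / N / √s := by gcongr
      _ = 1 / (√s * N) := by rw [div_div, mul_comm]
  have hsplit : (1 / 2 + 1 / √s) / N = 1 / (2 * N) + 1 / (√s * N) := by
    field_simp
  rw [epsN, hsplit]
  exact add_le_add hfirst hsecond

lemma exists_near_boundary_of_Sed_lt {N : ℕ} {ε δ x0 s : ℝ} (hε : 0 ≤ ε)
    (h : Sed N (-ε) δ x0 s < Sed N ε δ x0 s) :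
    ∃ m : ℤ, (x0 - m) / √N ∈ Set.Ioc (-ε) ε ∪ Set.Ioc (√s - ε) (√s + ε) := by
  unfold Sed at h
  split_ifs at h
  · exact absurd h (lt_irrefl 0)
  set P : ℝ → Set (ℤ × ℤ) := fun e => {p : ℤ × ℤ |
    (x0 - (p.1 : ℝ)) / √N ∈ Set.Ioc (-e) (√s + e) ∧
    (√N * ((p.2 : ℝ) - (x0 - (p.1 : ℝ)) ^ 2) + δ) /
        ((x0 - (p.1 : ℝ)) / √N) ∈ Set.Ico (-1 : ℝ) 1}
  change (P (-ε)).ncard < (P ε).ncard at h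
  have hmono : P (-ε) ⊆ P ε := fun p hp =>
    ⟨Set.Ioc_subset_Ioc (by linarith) (by linarith) hp.1, hp.2⟩
  obtain ⟨⟨m, n⟩, ⟨hin, hquot⟩, hnot⟩ :=
    Set.not_subset.mp fun h' => h.ne (congrArg Set.ncard (hmono.antisymm h'))
  refine ⟨m, ?_⟩
  have hout : (x0 - m) / √N ∉ Set.Ioc ε (√s - ε) := fun hd =>
    hnot ⟨by simpa [sub_eq_add_neg] using hd, hquot⟩
  rw [Set.mem_Ioc] at hin hout
  rw [Set.mem_union, Set.mem_Ioc, Set.mem_Ioc]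
  by_cases hd : (x0 - m) / √N ≤ ε
  · exact Or.inl ⟨hin.1, hd⟩
  · exact Or.inr ⟨lt_of_not_ge fun h' => hout ⟨not_le.mp hd, h'⟩, hin.2⟩

lemma card_le_card_of_exists_sub_mul_mem {N : ℕ} {A : Finset ℕ} {T : Finset ℤ}
    (hA : ∀ k ∈ A, k < N) (hT : ∀ k ∈ A, ∃ m : ℤ, (k : ℤ) - m * N ∈ T) :
    A.card ≤ T.card := by
  calc A.card = (A.image ((↑) : ℕ → ℤ)).card :=
        (Finset.card_image_of_injective _ Nat.cast_injective).symm
    _ ≤ (T.image (· % (N : ℤ))).card := by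
        refine Finset.card_le_card fun x hx => ?_
        obtain ⟨k, hk, rfl⟩ := Finset.mem_image.mp hx
        obtain ⟨m, hm⟩ := hT k hk
        refine Finset.mem_image.mpr ⟨_, hm, ?_⟩
        rw [Int.sub_mul_emod_self_right, Int.emod_eq_of_lt (by positivity)]
        exact_mod_cast hA k hk
    _ ≤ T.card := Finset.card_image_le

lemma mem_Ioc_floor_of_div_mem_Ioc {j : ℤ} {a b t : ℝ} (ht : 0 < t)
    (h : (j : ℝ) / t ∈ Set.Ioc a b) : j ∈ Finset.Ioc ⌊a * t⌋ ⌊b * t⌋ := by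
  rw [Set.mem_Ioc, lt_div_iff₀ ht, div_le_iff₀ ht] at h
  exact Finset.mem_Ioc.mpr ⟨Int.floor_lt.mpr h.1, Int.le_floor.mpr h.2⟩

lemma card_Ioc_floor_le {a b : ℝ} (h : a ≤ b) :
    ((Finset.Ioc ⌊a⌋ ⌊b⌋).card : ℝ) ≤ b - a + 1 := by
  rw [Int.card_Ioc, ← Int.cast_natCast,
    Int.toNat_of_nonneg (sub_nonneg.mpr (Int.floor_le_floor h))]
  push_cast
  linarith [Int.floor_le b, Int.sub_one_lt_floor a]

lemma card_Sed_lt_Sed_le {N : ℕ} (hN : 0 < N) {ε δ s : ℝ} (hε : 0 ≤ ε) :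
    (((Finset.Ico 1 N).filter (fun k : ℕ =>
      Sed N (-ε) δ ((k : ℝ) / N) s < Sed N ε δ ((k : ℝ) / N) s)).card : ℝ) ≤
      4 * ε * (N * √N) + 2 := by
  set t : ℝ := N * √N
  have ht : 0 < t := by positivity
  set T : Finset ℤ :=
    Finset.Ioc ⌊-ε * t⌋ ⌊ε * t⌋ ∪ Finset.Ioc ⌊(√s - ε) * t⌋ ⌊(√s + ε) * t⌋
  have hresidue : ∀ k ∈ (Finset.Ico 1 N).filter (fun k : ℕ =>
      Sed N (-ε) δ ((k : ℝ) / N) s < Sed N ε δ ((k : ℝ) / N) s),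
      ∃ m : ℤ, (k : ℤ) - m * N ∈ T := by
    intro k hk
    obtain ⟨m, hm⟩ := exists_near_boundary_of_Sed_lt hε (Finset.mem_filter.mp hk).2
    have hscale : (((k : ℤ) - m * N : ℤ) : ℝ) / t = ((k : ℝ) / N - m) / √N := by
      push_cast
      field_simp
      ring
    refine ⟨m, ?_⟩
    rw [← hscale] at hm
    rcases hm with hm | hm
    · exact Finset.mem_union_left _ (mem_Ioc_floor_of_div_mem_Ioc ht hm)
    · exact Finset.mem_union_right _ (mem_Ioc_floor_of_div_mem_Ioc ht hm)
  have hεt : 0 ≤ ε * t := by positivity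
  calc _ ≤ (T.card : ℝ) := by
        exact_mod_cast card_le_card_of_exists_sub_mul_mem
          (fun k hk => (Finset.mem_Ico.mp (Finset.mem_filter.mp hk).1).2) hresidue
    _ ≤ (Finset.Ioc ⌊-ε * t⌋ ⌊ε * t⌋).card +
          (Finset.Ioc ⌊(√s - ε) * t⌋ ⌊(√s + ε) * t⌋).card := by
        exact_mod_cast Finset.card_union_le _ _
    _ ≤ (ε * t - -ε * t + 1) + ((√s + ε) * t - (√s - ε) * t + 1) :=
        add_le_add (card_Ioc_floor_le (by linarith)) (card_Ioc_floor_le (by nlinarith))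
    _ = 4 * ε * t + 2 := by ring

theorem proportion_Sed_lt_Sed_tendsto_zero (s : ℝ) (hs : 0 < s) :
    Filter.Tendsto
      (fun N : ℕ =>
        (((Finset.Ico 1 N).filter (fun k : ℕ =>
          Sed N (-epsN N s) (deltaN N) ((k : ℝ) / N) s <
            Sed N (epsN N s) (deltaN N) ((k : ℝ) / N) s)).card : ℝ) / N)
      Filter.atTop (nhds 0) := by
  set c : ℝ := 1 / 2 + 1 / √s
  have hc : 0 < c := by positivity
  have hsqrt : Filter.Tendsto (fun N : ℕ => √(N : ℝ)) Filter.atTop Filter.atTop :=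
    Real.tendsto_sqrt_atTop.comp tendsto_natCast_atTop_atTop
  refine squeeze_zero' (Filter.Eventually.of_forall fun N => by positivity) ?_
    (tendsto_const_nhds.div_atTop hsqrt :
      Filter.Tendsto (fun N : ℕ => (4 * c + 2) / √(N : ℝ)) _ _)
  filter_upwards [Filter.eventually_gt_atTop 0,
    (tendsto_natCast_atTop_atTop.const_mul_atTop hs).eventually_ge_atTop 1] with N hN hsN
  have hN' : (0 : ℝ) < N := by exact_mod_cast hN
  have hsqrtN : 1 ≤ √(N : ℝ) := Real.one_le_sqrt.mpr (by exact_mod_cast hN)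
  have hε : epsN N s * N ≤ c := by
    have := epsN_le hs hsN
    rwa [le_div_iff₀ hN'] at this
  have hε0 : 0 ≤ epsN N s := by unfold epsN; positivity
  calc _ ≤ (4 * epsN N s * (N * √N) + 2) / N := by gcongr; exact card_Sed_lt_Sed_le hN hε0
    _ ≤ (4 * c + 2) * √N / N := by gcongr; nlinarith
    _ = (4 * c + 2) / √N := by rw [mul_div_assoc, Real.sqrt_div_self', mul_one_div]
end

section
/- Fix a real s > 0. There exists N₀ ∈ ℕ such that for every integer N ≥ N₀ and every j ∈ ℕ, the bound |E_{j,N}(s) − Ê_{j,N}(s)| ≤ 1/N holds. -/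
open scoped Classical

/-- `Shat N x0 s` is defined as `S N x0 s` but counting only non-squares `n`. -/
noncomputable def Shat (N : ℕ) (x0 s : ℝ) : ℕ :=
  ((Finset.Icc 1 ⌊s * (N : ℝ)⌋₊).filter (fun n : ℕ =>
    (¬ ∃ k : ℕ, n = k ^ 2) ∧
    ∃ m : ℤ, -(1 / (2 * (N : ℝ))) ≤ Real.sqrt n - x0 + m ∧
      Real.sqrt n - x0 + m < 1 / (2 * (N : ℝ)))).card

/-- `Ejn j N s` is the proportion of `k ∈ {0,…,N−1}` with `S N (k/N) s = j`. -/
noncomputable def Ejn (j N : ℕ) (s : ℝ) : ℝ :=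
  (((Finset.range N).filter (fun k : ℕ => S N ((k : ℝ) / N) s = j)).card : ℝ) / N

/-- `Ehat j N s` is the proportion of `k ∈ {0,…,N−1}` with `Shat N (k/N) s = j`. -/
noncomputable def Ehat (j N : ℕ) (s : ℝ) : ℝ :=
  (((Finset.range N).filter (fun k : ℕ => Shat N ((k : ℝ) / N) s = j)).card : ℝ) / N

/-- For `1 ≤ k < N`, no square lands in the arc around `k/N`, so `S = Shat`. -/
lemma S_eq_Shat (N : ℕ) (s : ℝ) (k : ℕ) (hk : k ≠ 0) (hkN : k < N) :
    S N ((k : ℝ) / N) s = Shat N ((k : ℝ) / N) s := by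
  have hN0 : 0 < N := lt_of_le_of_lt (Nat.zero_le k) hkN
  have hNpos : (0 : ℝ) < N := by exact_mod_cast hN0
  unfold S Shat
  congr 1
  apply Finset.filter_congr
  intro n _

  constructor
  · intro h
    refine ⟨?_, h⟩
    rintro ⟨t, rfl⟩
    obtain ⟨m, h1, h2⟩ := h
    have hsq : Real.sqrt ((t ^ 2 : ℕ) : ℝ) = (t : ℝ) := by
      rw [show ((t ^ 2 : ℕ) : ℝ) = (t : ℝ) ^ 2 by push_cast; ring]
      exact Real.sqrt_sq (by positivity)
    rw [hsq] at h1 h2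
    set z : ℤ := (N : ℤ) * ((t : ℤ) + m) - (k : ℤ) with hz
    have hcast : ((z : ℤ) : ℝ) = (N : ℝ) * ((t : ℝ) + (m : ℝ)) - (k : ℝ) := by
      rw [hz]; push_cast; ring
    have hkN' : (k : ℝ) / N * N = (k : ℝ) := div_mul_cancel₀ _ (ne_of_gt hNpos)
    have h2N' : (1 / (2 * (N : ℝ))) * N = 1 / 2 := by field_simp
    have hz1 : (-(1 : ℝ)) / 2 ≤ (z : ℝ) := by
      rw [hcast]
      nlinarith [mul_le_mul_of_nonneg_right h1 hNpos.le, hkN', h2N']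
    have hz2 : (z : ℝ) < 1 / 2 := by
      rw [hcast]
      nlinarith [mul_lt_mul_of_pos_right h2 hNpos, hkN', h2N']
    have hz0 : z = 0 := by
      have ha : (-1 : ℤ) < z := by exact_mod_cast show (-1 : ℝ) < (z : ℝ) by linarith
      have hb : z < 1 := by exact_mod_cast show ((z : ℤ) : ℝ) < 1 by linarith
      omega
    have hdvd : (N : ℤ) ∣ (k : ℤ) := ⟨(t : ℤ) + m, by omega⟩
    have hkpos : (0 : ℤ) < (k : ℤ) := by exact_mod_cast Nat.pos_of_ne_zero hk
    have := Int.le_of_dvd hkpos hdvd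
    have : (N : ℤ) ≤ (k : ℤ) := this
    exact absurd (by exact_mod_cast this) (not_le.mpr hkN)
  · exact And.right

theorem Ejn_close_to_Ehat (s : ℝ) (hs : 0 < s) :
    ∃ N₀ : ℕ, ∀ N : ℕ, N₀ ≤ N → ∀ j : ℕ,
      |Ejn j N s - Ehat j N s| ≤ 1 / N := by
  refine ⟨1, fun N hN j => ?_⟩
  have hN0 : 0 < N := hN
  have hNpos : (0 : ℝ) < N := by exact_mod_cast hN0
  set A := (Finset.range N).filter (fun k : ℕ => S N ((k : ℝ) / N) s = j) with hA
  set B := (Finset.range N).filter (fun k : ℕ => Shat N ((k : ℝ) / N) s = j) with hB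
  have key : ∀ k, k ∈ Finset.range N → k ≠ 0 → (k ∈ A ↔ k ∈ B) := by
    intro k hkr hk
    have hkN : k < N := Finset.mem_range.mp hkr
    simp only [hA, hB, Finset.mem_filter, S_eq_Shat N s k hk hkN]
  have hsub1 : A ⊆ insert 0 B := by
    intro k hkA
    rcases eq_or_ne k 0 with rfl | hk
    · exact Finset.mem_insert_self _ _
    · have hkr : k ∈ Finset.range N := (Finset.mem_filter.mp hkA).1
      exact Finset.mem_insert_of_mem ((key k hkr hk).mp hkA)
  have hsub2 : B ⊆ insert 0 A := by
    intro k hkB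
    rcases eq_or_ne k 0 with rfl | hk
    · exact Finset.mem_insert_self _ _
    · have hkr : k ∈ Finset.range N := (Finset.mem_filter.mp hkB).1
      exact Finset.mem_insert_of_mem ((key k hkr hk).mpr hkB)
  have c1 : A.card ≤ B.card + 1 :=
    le_trans (Finset.card_le_card hsub1) (Finset.card_insert_le _ _)
  have c2 : B.card ≤ A.card + 1 :=
    le_trans (Finset.card_le_card hsub2) (Finset.card_insert_le _ _)
  have habs : |(A.card : ℝ) - (B.card : ℝ)| ≤ 1 := by
    rw [abs_le]
    constructor
    · have : (B.card : ℝ) ≤ (A.card : ℝ) + 1 := by exact_mod_cast c2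
      linarith
    · have : (A.card : ℝ) ≤ (B.card : ℝ) + 1 := by exact_mod_cast c1
      linarith
  have hE : Ejn j N s - Ehat j N s = ((A.card : ℝ) - (B.card : ℝ)) / N := by
    rw [Ejn, Ehat, ← hA, ← hB, sub_div]
  rw [hE, abs_div, abs_of_pos hNpos]
  gcongr
end
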